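/- If (A₁, B₁) and (A₂, B₂) are positive pairs (A_j : X → X', B_j : Y → X'), then (A₁ + A₂, B₁ + B₂) is a positive pair and ω(A₁ + A₂, B₁ + B₂) ≤ ω(A₁, B₁) + ω(A₂, B₂) in the Loewner ordering on Hermitian operators Y → Y'. -/

import Mathlib

/-!
Write `A_j = R_j* R_j` and `B_j = R_j* T_j`. Since `‖R x‖² = ‖R₁ x‖² + ‖R₂ x‖²`, Cauchy–Schwarz
bounds the functional `x ↦ (B₁ + B₂) y x = ⟪R₁ x, T₁ y⟫ + ⟪R₂ x, T₂ y⟫` by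
`√(‖T₁ y‖² + ‖T₂ y‖²) · ‖R x‖`. By Hahn–Banach and Riesz it is `⟪R x, k⟫` for some `k` of norm at
most this bound, and projecting `k` onto the closure of the range of `R` keeps both properties.
There `k` is unique, so `T y := k` is linear, and `ω(A₁ + A₂, B₁ + B₂) y y = ‖T y‖²` is at most
`‖T₁ y‖² + ‖T₂ y‖² = (ω(A₁, B₁) + ω(A₂, B₂)) y y`.
-/

open scoped ComplexOrder ComplexConjugate
open Complex

noncomputable section

/-- For a linear map `R : V → H` into a Hilbert space, `adjMap R : H → V'` is the
operator `R*`, sending `h` to the antilinear functional `v ↦ (h | R v)`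
(in Mathlib's convention, `v ↦ ⟪R v, h⟫`). -/
def adjMap {V H : Type*} [AddCommGroup V] [Module ℂ V]
    [NormedAddCommGroup H] [InnerProductSpace ℂ H] (R : V →ₗ[ℂ] H) :
    H →ₗ[ℂ] (V →ₗ⋆[ℂ] ℂ) where
  toFun h :=
    { toFun := fun v => @inner ℂ _ _ (R v) h
      map_add' := fun v w => by simp [inner_add_left]
      map_smul' := fun c v => by simp [inner_smul_left, mul_comm] }
  map_add' h₁ h₂ := by ext v; simp [inner_add_right]
  map_smul' c h := by ext v; simp [inner_smul_right]

/-- For `B : Y → X'`, the operator `B~ := B'↾X : X → Y'`, `(B~ x) y = conj (⟨B y, x⟩)`. -/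
def Btilde {X Y : Type*} [AddCommGroup X] [Module ℂ X] [AddCommGroup Y] [Module ℂ Y]
    (B : Y →ₗ[ℂ] (X →ₗ⋆[ℂ] ℂ)) : X →ₗ[ℂ] (Y →ₗ⋆[ℂ] ℂ) where
  toFun x :=
    { toFun := fun y => conj (B y x)
      map_add' := fun y₁ y₂ => by simp
      map_smul' := fun c y => by simp }
  map_add' x₁ x₂ := by ext y; simp
  map_smul' c x := by ext y; simp

open scoped InnerProductSpace

lemma norm_inner_add_inner_le {𝕜 E F : Type*} [RCLike 𝕜]
    [NormedAddCommGroup E] [InnerProductSpace 𝕜 E] [NormedAddCommGroup F] [InnerProductSpace 𝕜 F]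
    (a b : E) (c d : F) :
    ‖⟪a, b⟫_𝕜 + ⟪c, d⟫_𝕜‖ ≤ √(‖a‖ ^ 2 + ‖c‖ ^ 2) * √(‖b‖ ^ 2 + ‖d‖ ^ 2) := by
  simpa [WithLp.prod_inner_apply, WithLp.prod_norm_eq_of_L2] using
    norm_inner_le_norm (𝕜 := 𝕜) (WithLp.toLp 2 (a, c)) (WithLp.toLp 2 (b, d))

section adjMap

variable {X H : Type*} [AddCommGroup X] [Module ℂ X] [NormedAddCommGroup H] [InnerProductSpace ℂ H]

@[simp]
lemma adjMap_apply (R : X →ₗ[ℂ] H) (h : H) (x : X) : adjMap R h x = ⟪R x, h⟫_ℂ := rfl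

lemma adjMap_apply_self (R : X →ₗ[ℂ] H) (x : X) : adjMap R (R x) x = ((‖R x‖ ^ 2 : ℝ) : ℂ) := by
  simp [inner_self_eq_norm_sq_to_K]

lemma eq_of_adjMap_eq {R : X →ₗ[ℂ] H} {k k' : H} (hk : k ∈ closure (Set.range R))
    (hk' : k' ∈ closure (Set.range R)) (h : adjMap R k = adjMap R k') : k = k' := by
  set K := (LinearMap.range R).topologicalClosure
  have hmem : k - k' ∈ K := K.sub_mem hk hk'
  have horth : k - k' ∈ Kᗮ := by
    rw [Submodule.orthogonal_closure]
    rintro _ ⟨x, rfl⟩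
    simpa [inner_sub_right, sub_eq_zero] using LinearMap.congr_fun h x
  have := Submodule.mem_inf.mpr ⟨hmem, horth⟩
  rwa [K.inf_orthogonal_eq_bot, Submodule.mem_bot, sub_eq_zero] at this

lemma exists_adjMap_eq_of_norm_le [CompleteSpace H] (R : X →ₗ[ℂ] H) (b : X →ₗ⋆[ℂ] ℂ) {C : ℝ}
    (hC : 0 ≤ C) (hb : ∀ x, ‖b x‖ ≤ C * ‖R x‖) :
    ∃ k ∈ closure (Set.range R), adjMap R k = b ∧ ‖k‖ ≤ C := by
  -- Riesz represents `⟪k, ·⟫`, the conjugate of `adjMap R k`, so we extend the conjugate of `b`.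
  let conjb : X →ₗ[ℂ] ℂ := (starLinearEquiv ℂ (A := ℂ)).toLinearMap.comp b
  have hker : LinearMap.ker R ≤ LinearMap.ker conjb := fun x hx => by
    have : ‖b x‖ ≤ 0 := by simpa [LinearMap.mem_ker.mp hx] using hb x
    simp [conjb, norm_le_zero_iff.mp this]
  let f₀ : LinearMap.range R →ₗ[ℂ] ℂ :=
    (LinearMap.ker R).liftQ conjb hker ∘ₗ R.quotKerEquivRange.symm.toLinearMap
  have hf₀ : ∀ x, f₀ ⟨R x, LinearMap.mem_range_self R x⟩ = conj (b x) := fun x => by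
    simp only [f₀, LinearMap.comp_apply, LinearEquiv.coe_coe,
      LinearMap.quotKerEquivRange_symm_apply_image]
    rfl
  let f : StrongDual ℂ (LinearMap.range R) := f₀.mkContinuous C <| by
    rintro ⟨_, x, rfl⟩
    simpa [hf₀] using hb x
  obtain ⟨g, hgf, hg⟩ := exists_extension_norm_eq _ f
  let K := (LinearMap.range R).topologicalClosure
  set k₀ := (InnerProductSpace.toDual ℂ H).symm g
  refine ⟨K.starProjection k₀, K.starProjection_apply_mem k₀, ?_, ?_⟩
  · ext x
    have hx : R x ∈ K := (LinearMap.range R).le_topologicalClosure (LinearMap.mem_range_self R x)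
    rw [adjMap_apply, ← K.inner_starProjection_left_eq_right, K.starProjection_eq_self_iff.mpr hx,
      ← inner_conj_symm, InnerProductSpace.toDual_symm_apply]
    simpa [f, hf₀] using congrArg conj (hgf ⟨R x, LinearMap.mem_range_self R x⟩)
  · calc ‖K.starProjection k₀‖ ≤ ‖k₀‖ := K.norm_starProjection_apply_le k₀
      _ = ‖f‖ := by rw [LinearIsometryEquiv.norm_map, hg]
      _ ≤ C := f₀.mkContinuous_norm_le hC _

theorem exists_linearMap_adjMap_eq_of_norm_le [CompleteSpace H] {Y : Type*} [AddCommGroup Y]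
    [Module ℂ Y] (R : X →ₗ[ℂ] H) (B : Y →ₗ[ℂ] (X →ₗ⋆[ℂ] ℂ)) (C : Y → ℝ) (hC : ∀ y, 0 ≤ C y)
    (hB : ∀ y x, ‖B y x‖ ≤ C y * ‖R x‖) :
    ∃ T : Y →ₗ[ℂ] H, (∀ y, adjMap R (T y) = B y) ∧ (∀ y, T y ∈ closure (Set.range R)) ∧
      ∀ y, ‖T y‖ ≤ C y := by
  choose k hk_mem hk_adj hk_norm using fun y => exists_adjMap_eq_of_norm_le R (B y) (hC y) (hB y)
  let K := (LinearMap.range R).topologicalClosure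
  let T : Y →ₗ[ℂ] H :=
    { toFun := k
      map_add' := fun y y' => eq_of_adjMap_eq (hk_mem _) (K.add_mem (hk_mem y) (hk_mem y'))
        (by simp only [map_add, hk_adj])
      map_smul' := fun c y => eq_of_adjMap_eq (hk_mem _) (K.smul_mem c (hk_mem y))
        (by simp only [map_smul, hk_adj, RingHom.id_apply]) }
  exact ⟨T, hk_adj, hk_mem, hk_norm⟩

end adjMap

theorem schur_stmt18_general {X Y H H₁ H₂ : Type} [AddCommGroup X] [Module ℂ X]
    [AddCommGroup Y] [Module ℂ Y]
    [NormedAddCommGroup H] [InnerProductSpace ℂ H] [CompleteSpace H]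
    [NormedAddCommGroup H₁] [InnerProductSpace ℂ H₁]
    [NormedAddCommGroup H₂] [InnerProductSpace ℂ H₂]
    (A₁ A₂ : X →ₗ[ℂ] (X →ₗ⋆[ℂ] ℂ)) (B₁ B₂ : Y →ₗ[ℂ] (X →ₗ⋆[ℂ] ℂ))
    (R₁ : X →ₗ[ℂ] H₁) (hR₁ : ∀ x, A₁ x = adjMap R₁ (R₁ x))
    (T₁ : Y →ₗ[ℂ] H₁) (hT₁ : ∀ y, adjMap R₁ (T₁ y) = B₁ y)
    (R₂ : X →ₗ[ℂ] H₂) (hR₂ : ∀ x, A₂ x = adjMap R₂ (R₂ x))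
    (T₂ : Y →ₗ[ℂ] H₂) (hT₂ : ∀ y, adjMap R₂ (T₂ y) = B₂ y)
    -- (R, H): a square root of A₁ + A₂
    (R : X →ₗ[ℂ] H) (hR : ∀ x, A₁ x + A₂ x = adjMap R (R x)) :
    ∃ T : Y →ₗ[ℂ] H, (∀ y, adjMap R (T y) = B₁ y + B₂ y) ∧
      (∀ y, T y ∈ closure (Set.range R)) ∧
      ∀ y, (adjMap T (T y)) y ≤ (adjMap T₁ (T₁ y)) y + (adjMap T₂ (T₂ y)) y := by
  have hR_norm : ∀ x, ‖R x‖ = √(‖R₁ x‖ ^ 2 + ‖R₂ x‖ ^ 2) := fun x => by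
    have h := LinearMap.congr_fun (hR x) x
    rw [LinearMap.add_apply, hR₁, hR₂, adjMap_apply_self, adjMap_apply_self, adjMap_apply_self,
      ← Complex.ofReal_add, Complex.ofReal_inj] at h
    rw [h, Real.sqrt_sq (norm_nonneg _)]
  obtain ⟨T, hT, hT_mem, hT_norm⟩ := exists_linearMap_adjMap_eq_of_norm_le R (B₁ + B₂)
    (fun y => √(‖T₁ y‖ ^ 2 + ‖T₂ y‖ ^ 2)) (fun _ => Real.sqrt_nonneg _) fun y x => by
      rw [LinearMap.add_apply, LinearMap.add_apply, ← hT₁, ← hT₂, adjMap_apply, adjMap_apply,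
        hR_norm, mul_comm]
      exact norm_inner_add_inner_le _ _ _ _
  refine ⟨T, hT, hT_mem, fun y => ?_⟩
  rw [adjMap_apply_self, adjMap_apply_self, adjMap_apply_self, ← Complex.ofReal_add,
    Complex.real_le_real, ← Real.sq_sqrt (by positivity : 0 ≤ ‖T₁ y‖ ^ 2 + ‖T₂ y‖ ^ 2)]
  exact pow_le_pow_left₀ (norm_nonneg _) (hT_norm y) 2

theorem schur_stmt18 {X Y H H₁ H₂ : Type} [AddCommGroup X] [Module ℂ X]
    [AddCommGroup Y] [Module ℂ Y]
    [NormedAddCommGroup H] [InnerProductSpace ℂ H] [CompleteSpace H]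
    [NormedAddCommGroup H₁] [InnerProductSpace ℂ H₁] [CompleteSpace H₁]
    [NormedAddCommGroup H₂] [InnerProductSpace ℂ H₂] [CompleteSpace H₂]
    (A₁ A₂ : X →ₗ[ℂ] (X →ₗ⋆[ℂ] ℂ)) (B₁ B₂ : Y →ₗ[ℂ] (X →ₗ⋆[ℂ] ℂ))
    (R₁ : X →ₗ[ℂ] H₁) (hR₁ : ∀ x, A₁ x = adjMap R₁ (R₁ x))
    (T₁ : Y →ₗ[ℂ] H₁) (hT₁ : ∀ y, adjMap R₁ (T₁ y) = B₁ y)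
    (hT₁ran : ∀ y, T₁ y ∈ closure (Set.range R₁))
    (R₂ : X →ₗ[ℂ] H₂) (hR₂ : ∀ x, A₂ x = adjMap R₂ (R₂ x))
    (T₂ : Y →ₗ[ℂ] H₂) (hT₂ : ∀ y, adjMap R₂ (T₂ y) = B₂ y)
    (hT₂ran : ∀ y, T₂ y ∈ closure (Set.range R₂))
    -- (R, H): a square root of A₁ + A₂
    (R : X →ₗ[ℂ] H) (hR : ∀ x, A₁ x + A₂ x = adjMap R (R x)) :
    ∃ T : Y →ₗ[ℂ] H, (∀ y, adjMap R (T y) = B₁ y + B₂ y) ∧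
      (∀ y, T y ∈ closure (Set.range R)) ∧
      ∀ y, (adjMap T (T y)) y ≤ (adjMap T₁ (T₁ y)) y + (adjMap T₂ (T₂ y)) y :=
  schur_stmt18_general A₁ A₂ B₁ B₂ R₁ hR₁ T₁ hT₁ R₂ hR₂ T₂ hT₂ R hR
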